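/- arXiv:2503.13756 — 2 statements merged into one kernel-verified Lean document; each statement's English description precedes it below -/
import Mathlib

section
/- Let f, g be probability densities on ℝ² supported on the closed unit disk, and define H(θ) = d_{W2}²(P_θ f, P_θ g), the squared 1-D 2-Wasserstein distance between the line projections of f and of g at angle θ. Then H is 8-Lipschitz: |H(θ₁) − H(θ₂)| ≤ 8 |θ₁ − θ₂| for all θ₁, θ₂ ∈ [0, 2π). -/
open MeasureTheory Real Set

/-- CDF of a density `μ` on `ℝ`: `F_μ(t) = ∫_{-∞}^t μ`. -/
noncomputable def cdfOf (μ : ℝ → ℝ) (t : ℝ) : ℝ := ∫ x in Set.Iic t, μ x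

/-- Quantile function `Q_μ(z) = inf {t : F_μ(t) ≥ z}`. -/
noncomputable def quantileOf (μ : ℝ → ℝ) (z : ℝ) : ℝ := sInf {t : ℝ | z ≤ cdfOf μ t}

/-- `d_{Wp}^p(μ, ν) = ∫₀¹ |Q_μ(z) − Q_ν(z)|^p dz`. -/
noncomputable def wassersteinPow (p : ℝ) (μ ν : ℝ → ℝ) : ℝ :=
  ∫ z in Set.Ioo (0:ℝ) 1, |quantileOf μ z - quantileOf ν z| ^ p

/-- 1-D `p`-Wasserstein distance between densities. -/
noncomputable def wasserstein (p : ℝ) (μ ν : ℝ → ℝ) : ℝ :=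
  (wassersteinPow p μ ν) ^ (1 / p)

/-- Line projection of an image `f : ℝ² → ℝ` at angle `θ`:
`P_θ f(s) = ∫ f(s(cos θ, sin θ) + t(−sin θ, cos θ)) dt`. -/
noncomputable def lineProj (f : ℝ × ℝ → ℝ) (θ : ℝ) (s : ℝ) : ℝ :=
  ∫ t : ℝ, f (s * Real.cos θ - t * Real.sin θ, s * Real.sin θ + t * Real.cos θ)

/-- `d_{SWp}^p(f, g) = (1/2π) ∫₀^{2π} d_{Wp}^p(P_θ f, P_θ g) dθ`. -/
noncomputable def slicedWassersteinPow (p : ℝ) (f g : ℝ × ℝ → ℝ) : ℝ :=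
  (1 / (2 * Real.pi)) * ∫ θ in Set.Ioo (0:ℝ) (2 * Real.pi),
    wassersteinPow p (lineProj f θ) (lineProj g θ)

/-- Sliced `p`-Wasserstein distance between two images. -/
noncomputable def slicedWasserstein (p : ℝ) (f g : ℝ × ℝ → ℝ) : ℝ :=
  (slicedWassersteinPow p f g) ^ (1 / p)

/-- Rotation of an image by angle `α`: `(R_α g)(x) = g(R_α⁻¹ x)`. -/
noncomputable def rotImage (α : ℝ) (g : ℝ × ℝ → ℝ) : ℝ × ℝ → ℝ :=
  fun x => g (x.1 * Real.cos α + x.2 * Real.sin α, -x.1 * Real.sin α + x.2 * Real.cos α)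

/-!
The quantile function is the generalized inverse of the CDF, so by Tonelli the `L¹` distance
between two quantile functions is at most the area between the two CDF graphs. For the CDFs of
`P_θ₁ f` and `P_θ₂ f` that area is at most `∫ f(x) |⟨x, e_θ₁⟩ - ⟨x, e_θ₂⟩| dx ≤ |θ₁ - θ₂|`, so
`W₁(P_θ₁ f, P_θ₂ f) ≤ |θ₁ - θ₂|`. All quantiles lie in `[-1, 1]`, so `a² - b² = (a - b)(a + b)`
with `|a + b| ≤ 4` gives `|W₂²(μ₁, ν₁) - W₂²(μ₂, ν₂)| ≤ 4 (W₁(μ₁, μ₂) + W₁(ν₁, ν₂))`, whence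
the constant `8`.
-/

open scoped symmDiff

theorem Real.volume_Ici_symmDiff_Ici (a b : ℝ) :
    volume (Ici a ∆ Ici b) = ENNReal.ofReal |a - b| := by
  have : Ici a ∆ Ici b = Ico (min a b) (max a b) := by
    ext t
    simp only [mem_symmDiff, mem_Ici, mem_Ico, min_le_iff, lt_max_iff]
    grind
  rw [this, volume_Ico, max_sub_min_eq_abs']

theorem Real.volume_Iic_symmDiff_Iic (a b : ℝ) :
    volume (Iic a ∆ Iic b) = ENNReal.ofReal |a - b| := by
  have : Iic a ∆ Iic b = Ioc (min a b) (max a b) := by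
    ext t
    simp only [mem_symmDiff, mem_Iic, mem_Ioc, min_lt_iff, le_max_iff]
    grind
  rw [this, volume_Ioc, max_sub_min_eq_abs']

theorem lintegral_ofReal_abs_sub_eq_lintegral_measure_symmDiff {X : Type*} [MeasurableSpace X]
    (ν : Measure X) [SFinite ν] {a b : X → ℝ} (ha : Measurable a) (hb : Measurable b) :
    ∫⁻ x, ENNReal.ofReal |a x - b x| ∂ν = ∫⁻ t, ν ({x | a x ≤ t} ∆ {x | b x ≤ t}) := by
  have hS : MeasurableSet ({p : X × ℝ | a p.1 ≤ p.2} ∆ {p | b p.1 ≤ p.2}) :=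
    (measurableSet_le (ha.comp measurable_fst) measurable_snd).symmDiff
      (measurableSet_le (hb.comp measurable_fst) measurable_snd)
  calc ∫⁻ x, ENNReal.ofReal |a x - b x| ∂ν = ∫⁻ x, volume (Ici (a x) ∆ Ici (b x)) ∂ν := by
        simp_rw [Real.volume_Ici_symmDiff_Ici]
    _ = ν.prod volume ({p : X × ℝ | a p.1 ≤ p.2} ∆ {p | b p.1 ≤ p.2}) :=
        (Measure.prod_apply hS).symm
    _ = ∫⁻ t, ν ({x | a x ≤ t} ∆ {x | b x ≤ t}) := Measure.prod_apply_symm hS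

theorem lintegral_abs_sub_le_of_le_iff {Q₁ Q₂ F₁ F₂ : ℝ → ℝ}
    (hF₁ : Measurable F₁) (hF₂ : Measurable F₂)
    (hQ₁ : ∀ z ∈ Ioo (0:ℝ) 1, ∀ t, Q₁ z ≤ t ↔ z ≤ F₁ t)
    (hQ₂ : ∀ z ∈ Ioo (0:ℝ) 1, ∀ t, Q₂ z ≤ t ↔ z ≤ F₂ t) :
    ∫⁻ z in Ioo 0 1, ENNReal.ofReal |Q₁ z - Q₂ z| ≤ ∫⁻ t, ENNReal.ofReal |F₁ t - F₂ t| := by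
  set S := {p : ℝ × ℝ | p.1 ≤ F₁ p.2} ∆ {p | p.1 ≤ F₂ p.2}
  have hS : MeasurableSet S :=
    (measurableSet_le measurable_fst (hF₁.comp measurable_snd)).symmDiff
      (measurableSet_le measurable_fst (hF₂.comp measurable_snd))
  calc ∫⁻ z in Ioo 0 1, ENNReal.ofReal |Q₁ z - Q₂ z|
      = ∫⁻ z in Ioo 0 1, volume (Prod.mk z ⁻¹' S) := by
        refine setLIntegral_congr_fun measurableSet_Ioo fun z hz => ?_
        rw [← Real.volume_Ici_symmDiff_Ici]
        congr 1
        ext t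
        simp only [S, mem_preimage, mem_symmDiff, mem_Ici, mem_ofPred_eq, hQ₁ z hz, hQ₂ z hz]
    _ = (volume.restrict (Ioo 0 1)).prod volume S := (Measure.prod_apply hS).symm
    _ = ∫⁻ t, volume.restrict (Ioo 0 1) (Iic (F₁ t) ∆ Iic (F₂ t)) := Measure.prod_apply_symm hS
    _ ≤ ∫⁻ t, volume (Iic (F₁ t) ∆ Iic (F₂ t)) :=
        lintegral_mono fun t => Measure.restrict_apply_le _ _
    _ = ∫⁻ t, ENNReal.ofReal |F₁ t - F₂ t| := by simp_rw [Real.volume_Iic_symmDiff_Iic]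

theorem lintegral_abs_measureReal_sub_le {X : Type*} [MeasurableSpace X] (ν : Measure X)
    [IsFiniteMeasure ν] {a b : X → ℝ} (ha : Measurable a) (hb : Measurable b) :
    ∫⁻ t, ENNReal.ofReal |ν.real {x | a x ≤ t} - ν.real {x | b x ≤ t}|
      ≤ ∫⁻ x, ENNReal.ofReal |a x - b x| ∂ν := by
  rw [lintegral_ofReal_abs_sub_eq_lintegral_measure_symmDiff ν ha hb]
  refine lintegral_mono fun t => ?_
  rw [← ofReal_measureReal]
  exact ENNReal.ofReal_le_ofReal (abs_measureReal_sub_le_measureReal_symmDiff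
    (measurableSet_le ha measurable_const).nullMeasurableSet
    (measurableSet_le hb measurable_const).nullMeasurableSet)

theorem abs_integral_sq_sub_integral_sq_le {X : Type*} [MeasurableSpace X] {ν : Measure X}
    [IsFiniteMeasure ν] {u v : X → ℝ} {C : ℝ} (hu : AEStronglyMeasurable u ν)
    (hv : AEStronglyMeasurable v ν) (huC : ∀ᵐ x ∂ν, |u x| ≤ C) (hvC : ∀ᵐ x ∂ν, |v x| ≤ C) :
    |∫ x, u x ^ 2 ∂ν - ∫ x, v x ^ 2 ∂ν| ≤ 2 * C * ∫ x, |u x - v x| ∂ν := by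
  have hpt : ∀ᵐ x ∂ν, |u x ^ 2 - v x ^ 2| ≤ 2 * C * |u x - v x| := by
    filter_upwards [huC, hvC] with x hux hvx
    rw [sq_sub_sq, abs_mul]
    gcongr
    linarith [abs_add_le (u x) (v x)]
  have hsq : ∀ w : X → ℝ, AEStronglyMeasurable w ν → (∀ᵐ x ∂ν, |w x| ≤ C) →
      Integrable (fun x => w x ^ 2) ν := fun w hw hwC =>
    Integrable.of_bound (hw.pow 2) (C ^ 2) (by
      filter_upwards [hwC] with x hx
      rw [Real.norm_eq_abs, abs_pow]
      exact pow_le_pow_left₀ (abs_nonneg _) hx 2)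
  have hdiff : Integrable (fun x => |u x - v x|) ν :=
    Integrable.of_bound (hu.sub hv).norm (2 * C) (by
      filter_upwards [huC, hvC] with x hux hvx
      rw [Real.norm_eq_abs, abs_abs]
      linarith [abs_sub (u x) (v x)])
  calc |∫ x, u x ^ 2 ∂ν - ∫ x, v x ^ 2 ∂ν| = |∫ x, (u x ^ 2 - v x ^ 2) ∂ν| := by
        rw [integral_sub (hsq u hu huC) (hsq v hv hvC)]
    _ ≤ ∫ x, |u x ^ 2 - v x ^ 2| ∂ν := abs_integral_le_integral_abs
    _ ≤ ∫ x, 2 * C * |u x - v x| ∂ν :=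
        integral_mono_ae ((hsq u hu huC).sub (hsq v hv hvC)).abs (hdiff.const_mul _) hpt
    _ = 2 * C * ∫ x, |u x - v x| ∂ν := integral_const_mul _ _

theorem monotone_cdfOf {μ : ℝ → ℝ} (hμ : Integrable μ) (h0 : ∀ s, 0 ≤ μ s) :
    Monotone (cdfOf μ) := fun _ _ hst =>
  setIntegral_mono_set hμ.integrableOn (ae_of_all _ h0) (Iic_subset_Iic.2 hst).eventuallyLE

theorem continuous_cdfOf {μ : ℝ → ℝ} (hμ : Integrable μ) : Continuous (cdfOf μ) := by
  have h : cdfOf μ = fun t => cdfOf μ 0 + ∫ s in (0:ℝ)..t, μ s := by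
    ext t
    rw [← intervalIntegral.integral_Iic_sub_Iic hμ.integrableOn hμ.integrableOn, cdfOf, cdfOf]
    ring
  rw [h]
  exact continuous_const.add
    (intervalIntegral.continuous_primitive (fun _ _ => hμ.intervalIntegrable) 0)

theorem cdfOf_eq_zero {μ : ℝ → ℝ} (hμ : ∀ s, 1 < s ^ 2 → μ s = 0) {t : ℝ} (ht : t < -1) :
    cdfOf μ t = 0 :=
  setIntegral_eq_zero_of_forall_eq_zero fun s hs => hμ s (by rw [mem_Iic] at hs; nlinarith)

theorem cdfOf_eq_integral {μ : ℝ → ℝ} (hi : Integrable μ) (hμ : ∀ s, 1 < s ^ 2 → μ s = 0)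
    {t : ℝ} (ht : 1 ≤ t) : cdfOf μ t = ∫ s, μ s := by
  have hcompl : ∫ s in (Iic t)ᶜ, μ s = 0 := setIntegral_eq_zero_of_forall_eq_zero fun s hs =>
    hμ s (by rw [compl_Iic, mem_Ioi] at hs; nlinarith)
  rw [← integral_add_compl measurableSet_Iic hi, hcompl, add_zero, cdfOf]

structure IsUnitIntervalDensity (μ : ℝ → ℝ) : Prop where
  integrable : Integrable μ
  nonneg : ∀ s, 0 ≤ μ s
  eq_zero_of_one_lt_sq : ∀ s, 1 < s ^ 2 → μ s = 0
  integral_eq_one : ∫ s, μ s = 1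

namespace IsUnitIntervalDensity

variable {μ ν : ℝ → ℝ}

theorem cdfOf_one (hμ : IsUnitIntervalDensity μ) : cdfOf μ 1 = 1 :=
  (cdfOf_eq_integral hμ.integrable hμ.eq_zero_of_one_lt_sq le_rfl).trans hμ.integral_eq_one

theorem quantileOf_le_iff (hμ : IsUnitIntervalDensity μ) {z : ℝ} (hz : z ∈ Ioo (0:ℝ) 1) (t : ℝ) :
    quantileOf μ z ≤ t ↔ z ≤ cdfOf μ t := by
  have hbdd : BddBelow {t | z ≤ cdfOf μ t} := by
    refine ⟨-1, fun s hs => not_lt.1 fun h => ?_⟩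
    rw [mem_ofPred_eq, cdfOf_eq_zero hμ.eq_zero_of_one_lt_sq h] at hs
    exact hz.1.not_ge hs
  have hne : {t | z ≤ cdfOf μ t}.Nonempty := ⟨1, by rw [mem_ofPred_eq, hμ.cdfOf_one]; exact hz.2.le⟩
  have hclosed : IsClosed {t | z ≤ cdfOf μ t} :=
    isClosed_le continuous_const (continuous_cdfOf hμ.integrable)
  exact ⟨fun h => (hclosed.csInf_mem hne hbdd).trans (monotone_cdfOf hμ.integrable hμ.nonneg h),
    fun h => csInf_le hbdd h⟩

theorem quantileOf_mem_Icc (hμ : IsUnitIntervalDensity μ) {z : ℝ} (hz : z ∈ Ioo (0:ℝ) 1) :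
    quantileOf μ z ∈ Icc (-1) 1 := by
  refine ⟨not_lt.1 fun h => ?_, (hμ.quantileOf_le_iff hz 1).2 (by rw [hμ.cdfOf_one]; exact hz.2.le)⟩
  obtain ⟨t, hQt, ht⟩ := exists_between h
  have := (hμ.quantileOf_le_iff hz t).1 hQt.le
  rw [cdfOf_eq_zero hμ.eq_zero_of_one_lt_sq ht] at this
  exact hz.1.not_ge this

theorem monotoneOn_quantileOf (hμ : IsUnitIntervalDensity μ) :
    MonotoneOn (quantileOf μ) (Ioo 0 1) := fun _ hz _ hw hzw =>
  (hμ.quantileOf_le_iff hz _).2 (hzw.trans ((hμ.quantileOf_le_iff hw _).1 le_rfl))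

theorem ae_abs_quantileOf_le_one (hμ : IsUnitIntervalDensity μ) :
    ∀ᵐ z ∂volume.restrict (Ioo 0 1), |quantileOf μ z| ≤ 1 :=
  ae_restrict_of_forall_mem measurableSet_Ioo fun _ hz => abs_le.2 (hμ.quantileOf_mem_Icc hz)

theorem integrableOn_quantileOf (hμ : IsUnitIntervalDensity μ) :
    IntegrableOn (quantileOf μ) (Ioo 0 1) :=
  Integrable.of_bound (aemeasurable_restrict_of_monotoneOn measurableSet_Ioo
    hμ.monotoneOn_quantileOf).aestronglyMeasurable 1 hμ.ae_abs_quantileOf_le_one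

theorem ae_abs_quantileOf_sub_le_two (hμ : IsUnitIntervalDensity μ)
    (hν : IsUnitIntervalDensity ν) :
    ∀ᵐ z ∂volume.restrict (Ioo 0 1), |quantileOf μ z - quantileOf ν z| ≤ 2 := by
  filter_upwards [hμ.ae_abs_quantileOf_le_one, hν.ae_abs_quantileOf_le_one] with z hμz hνz
  linarith [abs_sub (quantileOf μ z) (quantileOf ν z)]

theorem integrableOn_abs_quantileOf_sub (hμ : IsUnitIntervalDensity μ)
    (hν : IsUnitIntervalDensity ν) :
    IntegrableOn (fun z => |quantileOf μ z - quantileOf ν z|) (Ioo 0 1) :=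
  (hμ.integrableOn_quantileOf.sub hν.integrableOn_quantileOf).abs

theorem ofReal_wassersteinPow_one_le (hμ : IsUnitIntervalDensity μ)
    (hν : IsUnitIntervalDensity ν) :
    ENNReal.ofReal (wassersteinPow 1 μ ν) ≤ ∫⁻ t, ENNReal.ofReal |cdfOf μ t - cdfOf ν t| :=
  calc ENNReal.ofReal (wassersteinPow 1 μ ν) ≤ ‖wassersteinPow 1 μ ν‖ₑ := by
        rw [Real.enorm_eq_ofReal_abs]; exact ENNReal.ofReal_le_ofReal (le_abs_self _)
    _ ≤ ∫⁻ z in Ioo 0 1, ENNReal.ofReal |quantileOf μ z - quantileOf ν z| := by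
        simpa [wassersteinPow, Real.enorm_eq_ofReal_abs] using enorm_integral_le_lintegral_enorm
          (μ := volume.restrict (Ioo 0 1)) fun z => |quantileOf μ z - quantileOf ν z| ^ (1:ℝ)
    _ ≤ ∫⁻ t, ENNReal.ofReal |cdfOf μ t - cdfOf ν t| :=
        lintegral_abs_sub_le_of_le_iff (continuous_cdfOf hμ.integrable).measurable
          (continuous_cdfOf hν.integrable).measurable (fun _ => hμ.quantileOf_le_iff)
          (fun _ => hν.quantileOf_le_iff)

theorem abs_wassersteinPow_two_sub_le {μ₁ ν₁ μ₂ ν₂ : ℝ → ℝ} (hμ₁ : IsUnitIntervalDensity μ₁)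
    (hν₁ : IsUnitIntervalDensity ν₁) (hμ₂ : IsUnitIntervalDensity μ₂)
    (hν₂ : IsUnitIntervalDensity ν₂) :
    |wassersteinPow 2 μ₁ ν₁ - wassersteinPow 2 μ₂ ν₂|
      ≤ 4 * (wassersteinPow 1 μ₁ μ₂ + wassersteinPow 1 ν₁ ν₂) := by
  set Q := quantileOf
  have htri : ∀ z, |(Q μ₁ z - Q ν₁ z) - (Q μ₂ z - Q ν₂ z)|
      ≤ |Q μ₁ z - Q μ₂ z| + |Q ν₁ z - Q ν₂ z| := fun z => by
    rw [sub_sub_sub_comm]; exact abs_sub _ _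
  simp only [wassersteinPow, Real.rpow_two, Real.rpow_one, sq_abs]
  calc _ ≤ 2 * 2 * ∫ z in Ioo 0 1, |(Q μ₁ z - Q ν₁ z) - (Q μ₂ z - Q ν₂ z)| :=
        abs_integral_sq_sub_integral_sq_le
          (hμ₁.integrableOn_quantileOf.sub hν₁.integrableOn_quantileOf).aestronglyMeasurable
          (hμ₂.integrableOn_quantileOf.sub hν₂.integrableOn_quantileOf).aestronglyMeasurable
          (hμ₁.ae_abs_quantileOf_sub_le_two hν₁) (hμ₂.ae_abs_quantileOf_sub_le_two hν₂)
    _ ≤ 2 * 2 * ∫ z in Ioo 0 1, (|Q μ₁ z - Q μ₂ z| + |Q ν₁ z - Q ν₂ z|) := by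
        refine mul_le_mul_of_nonneg_left ?_ (by norm_num)
        exact integral_mono_of_nonneg (ae_of_all _ fun _ => abs_nonneg _)
          ((hμ₁.integrableOn_abs_quantileOf_sub hμ₂).add
            (hν₁.integrableOn_abs_quantileOf_sub hν₂)) (ae_of_all _ htri)
    _ = _ := by
        rw [integral_add (hμ₁.integrableOn_abs_quantileOf_sub hμ₂)
          (hν₁.integrableOn_abs_quantileOf_sub hν₂)]
        norm_num

end IsUnitIntervalDensity

theorem abs_mul_cos_add_mul_sin_sub_le {x y : ℝ} (hxy : x ^ 2 + y ^ 2 ≤ 1) (θ₁ θ₂ : ℝ) :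
    |(x * cos θ₁ + y * sin θ₁) - (x * cos θ₂ + y * sin θ₂)| ≤ |θ₁ - θ₂| := by
  rw [← sq_le_sq]
  calc ((x * cos θ₁ + y * sin θ₁) - (x * cos θ₂ + y * sin θ₂)) ^ 2
      ≤ (x ^ 2 + y ^ 2) * ((cos θ₁ - cos θ₂) ^ 2 + (sin θ₁ - sin θ₂) ^ 2) := by
        nlinarith [sq_nonneg (x * (sin θ₁ - sin θ₂) - y * (cos θ₁ - cos θ₂))]
    _ ≤ (cos θ₁ - cos θ₂) ^ 2 + (sin θ₁ - sin θ₂) ^ 2 := mul_le_of_le_one_left (by positivity) hxy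
    _ = 2 - 2 * cos (θ₁ - θ₂) := by
        rw [cos_sub]; linear_combination sin_sq_add_cos_sq θ₁ + sin_sq_add_cos_sq θ₂
    _ ≤ (θ₁ - θ₂) ^ 2 := by linarith [one_sub_sq_div_two_le_cos (x := θ₁ - θ₂)]

noncomputable def planeRotation (θ : ℝ) : (ℝ × ℝ) ≃ᵐ (ℝ × ℝ) :=
  (Complex.measurableEquivRealProd.symm.trans
    (rotation (Circle.exp θ)).toHomeomorph.toMeasurableEquiv).trans Complex.measurableEquivRealProd

theorem planeRotation_apply (θ : ℝ) (p : ℝ × ℝ) :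
    planeRotation θ p = (p.1 * cos θ - p.2 * sin θ, p.1 * sin θ + p.2 * cos θ) := by
  ext <;> simp [planeRotation, Complex.measurableEquivRealProd, Circle.coe_exp] <;> ring

theorem measurePreserving_planeRotation (θ : ℝ) : MeasurePreserving (planeRotation θ) :=
  (Complex.volume_preserving_equiv_real_prod.symm.trans
    (rotation (Circle.exp θ)).measurePreserving).trans Complex.volume_preserving_equiv_real_prod

theorem lineProj_eq_integral_planeRotation (f : ℝ × ℝ → ℝ) (θ : ℝ) :
    lineProj f θ = fun s => ∫ t, f (planeRotation θ (s, t)) := by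
  simp only [planeRotation_apply]; rfl

section LineProj

variable {f : ℝ × ℝ → ℝ}

theorem integrable_comp_planeRotation (hf : Integrable f) (θ : ℝ) :
    Integrable (fun p => f (planeRotation θ p)) (volume.prod volume) := by
  rw [← Measure.volume_eq_prod]
  exact ((measurePreserving_planeRotation θ).integrable_comp_emb
    (planeRotation θ).measurableEmbedding).2 hf

theorem integrable_lineProj (hf : Integrable f) (θ : ℝ) : Integrable (lineProj f θ) := by
  rw [lineProj_eq_integral_planeRotation]
  exact (integrable_comp_planeRotation hf θ).integral_prod_left

theorem integral_lineProj (hf : Integrable f) (θ : ℝ) : ∫ s, lineProj f θ s = ∫ x, f x := by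
  rw [lineProj_eq_integral_planeRotation, integral_integral (integrable_comp_planeRotation hf θ),
    ← Measure.volume_eq_prod, (measurePreserving_planeRotation θ).integral_comp' f]

theorem lineProj_eq_zero (hf : ∀ x : ℝ × ℝ, 1 < x.1 ^ 2 + x.2 ^ 2 → f x = 0) (θ : ℝ) {s : ℝ}
    (hs : 1 < s ^ 2) : lineProj f θ s = 0 := by
  refine integral_eq_zero_of_ae (ae_of_all _ fun t => hf _ ?_)
  nlinarith [sin_sq_add_cos_sq θ, sq_nonneg t]

theorem cdfOf_lineProj (hf : Integrable f) (θ t : ℝ) :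
    cdfOf (lineProj f θ) t = ∫ x in {x : ℝ × ℝ | x.1 * cos θ + x.2 * sin θ ≤ t}, f x := by
  have hpre : planeRotation θ ⁻¹' {x : ℝ × ℝ | x.1 * cos θ + x.2 * sin θ ≤ t} = Iic t ×ˢ univ := by
    ext p
    have hp : (planeRotation θ p).1 * cos θ + (planeRotation θ p).2 * sin θ = p.1 := by
      rw [planeRotation_apply]; linear_combination p.1 * sin_sq_add_cos_sq θ
    simp [hp]
  rw [← (measurePreserving_planeRotation θ).setIntegral_preimage_emb
    (planeRotation θ).measurableEmbedding, hpre, Measure.volume_eq_prod,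
    setIntegral_prod _ (integrable_comp_planeRotation hf θ).integrableOn, cdfOf,
    Measure.restrict_univ, lineProj_eq_integral_planeRotation]

end LineProj

structure IsUnitDiskDensity (f : ℝ × ℝ → ℝ) : Prop where
  integrable : Integrable f
  nonneg : ∀ x, 0 ≤ f x
  eq_zero_of_one_lt : ∀ x : ℝ × ℝ, 1 < x.1 ^ 2 + x.2 ^ 2 → f x = 0
  integral_eq_one : ∫ x, f x = 1

namespace IsUnitDiskDensity

variable {f : ℝ × ℝ → ℝ}

theorem isUnitIntervalDensity_lineProj (hf : IsUnitDiskDensity f) (θ : ℝ) :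
    IsUnitIntervalDensity (lineProj f θ) where
  integrable := integrable_lineProj hf.integrable θ
  nonneg _ := integral_nonneg fun _ => hf.nonneg _
  eq_zero_of_one_lt_sq _ := lineProj_eq_zero hf.eq_zero_of_one_lt θ
  integral_eq_one := (integral_lineProj hf.integrable θ).trans hf.integral_eq_one

theorem lintegral_abs_cdfOf_lineProj_sub_le (hf : IsUnitDiskDensity f) (θ₁ θ₂ : ℝ) :
    ∫⁻ t, ENNReal.ofReal |cdfOf (lineProj f θ₁) t - cdfOf (lineProj f θ₂) t|
      ≤ ENNReal.ofReal |θ₁ - θ₂| := by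
  set ν := volume.withDensity fun x => ENNReal.ofReal (f x)
  have : IsFiniteMeasure ν := isFiniteMeasure_withDensity_ofReal hf.integrable.hasFiniteIntegral
  have hofReal : ∀ s, MeasurableSet s → ν s = ENNReal.ofReal (∫ x in s, f x) := fun s hs => by
    rw [withDensity_apply _ hs,
      ofReal_integral_eq_lintegral_ofReal hf.integrable.integrableOn (ae_of_all _ hf.nonneg)]
  have hcdf : ∀ θ t, cdfOf (lineProj f θ) t = ν.real {x | x.1 * cos θ + x.2 * sin θ ≤ t} :=
    fun θ t => by
      rw [measureReal_def, hofReal _ (measurableSet_le (by fun_prop) measurable_const),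
        ENNReal.toReal_ofReal (integral_nonneg fun _ => hf.nonneg _), cdfOf_lineProj hf.integrable]
  have hdisk : ∀ᵐ x ∂ν, x.1 ^ 2 + x.2 ^ 2 ≤ 1 :=
    (ae_withDensity_iff' hf.integrable.aemeasurable.ennreal_ofReal).2 <| ae_of_all _ fun x hx =>
      not_lt.1 fun h => hx (by rw [hf.eq_zero_of_one_lt x h, ENNReal.ofReal_zero])
  simp only [hcdf]
  calc _ ≤ ∫⁻ x, ENNReal.ofReal |(x.1 * cos θ₁ + x.2 * sin θ₁) - (x.1 * cos θ₂ + x.2 * sin θ₂)|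
          ∂ν :=
        lintegral_abs_measureReal_sub_le ν (by fun_prop) (by fun_prop)
    _ ≤ ∫⁻ _, ENNReal.ofReal |θ₁ - θ₂| ∂ν := lintegral_mono_ae <| hdisk.mono fun x hx =>
        ENNReal.ofReal_le_ofReal (abs_mul_cos_add_mul_sin_sub_le hx θ₁ θ₂)
    _ = ENNReal.ofReal |θ₁ - θ₂| := by
        rw [lintegral_const, hofReal _ MeasurableSet.univ, Measure.restrict_univ,
          hf.integral_eq_one, ENNReal.ofReal_one, mul_one]

theorem wassersteinPow_one_lineProj_le (hf : IsUnitDiskDensity f) (θ₁ θ₂ : ℝ) :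
    wassersteinPow 1 (lineProj f θ₁) (lineProj f θ₂) ≤ |θ₁ - θ₂| :=
  (ENNReal.ofReal_le_ofReal_iff (abs_nonneg _)).1 <|
    ((hf.isUnitIntervalDensity_lineProj θ₁).ofReal_wassersteinPow_one_le
      (hf.isUnitIntervalDensity_lineProj θ₂)).trans (hf.lintegral_abs_cdfOf_lineProj_sub_le θ₁ θ₂)

end IsUnitDiskDensity

theorem sliced_wasserstein_integrand_lipschitz_general
    (f g : ℝ × ℝ → ℝ)
    (hfnonneg : ∀ x, 0 ≤ f x) (hgnonneg : ∀ x, 0 ≤ g x)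
    (hfint : ∫ x : ℝ × ℝ, f x = 1) (hgint : ∫ x : ℝ × ℝ, g x = 1)
    (hfsupp : ∀ x : ℝ × ℝ, 1 < x.1 ^ 2 + x.2 ^ 2 → f x = 0)
    (hgsupp : ∀ x : ℝ × ℝ, 1 < x.1 ^ 2 + x.2 ^ 2 → g x = 0)
    (θ₁ θ₂ : ℝ) :
    |wassersteinPow 2 (lineProj f θ₁) (lineProj g θ₁)
      - wassersteinPow 2 (lineProj f θ₂) (lineProj g θ₂)| ≤ 8 * |θ₁ - θ₂| := by
  have hf : IsUnitDiskDensity f :=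
    ⟨.of_integral_ne_zero (by rw [hfint]; exact one_ne_zero), hfnonneg, hfsupp, hfint⟩
  have hg : IsUnitDiskDensity g :=
    ⟨.of_integral_ne_zero (by rw [hgint]; exact one_ne_zero), hgnonneg, hgsupp, hgint⟩
  calc _ ≤ 4 * (wassersteinPow 1 (lineProj f θ₁) (lineProj f θ₂)
          + wassersteinPow 1 (lineProj g θ₁) (lineProj g θ₂)) :=
        IsUnitIntervalDensity.abs_wassersteinPow_two_sub_le
          (hf.isUnitIntervalDensity_lineProj θ₁) (hg.isUnitIntervalDensity_lineProj θ₁)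
          (hf.isUnitIntervalDensity_lineProj θ₂) (hg.isUnitIntervalDensity_lineProj θ₂)
    _ ≤ 4 * (|θ₁ - θ₂| + |θ₁ - θ₂|) := by
        gcongr
        exacts [hf.wassersteinPow_one_lineProj_le θ₁ θ₂, hg.wassersteinPow_one_lineProj_le θ₁ θ₂]
    _ = 8 * |θ₁ - θ₂| := by ring

/-- The integrand of the sliced 2-Wasserstein distance is `8`-Lipschitz in the angle:
for probability densities `f, g` supported on the closed unit disk and
`H(θ) = d_{W2}²(P_θ f, P_θ g)`, one has `|H(θ₁) − H(θ₂)| ≤ 8 |θ₁ − θ₂|` for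
`θ₁, θ₂ ∈ [0, 2π)`. -/
theorem sliced_wasserstein_integrand_lipschitz
    (f g : ℝ × ℝ → ℝ)
    (hfnonneg : ∀ x, 0 ≤ f x) (hgnonneg : ∀ x, 0 ≤ g x)
    (hfint : ∫ x : ℝ × ℝ, f x = 1) (hgint : ∫ x : ℝ × ℝ, g x = 1)
    (hfsupp : ∀ x : ℝ × ℝ, 1 < x.1 ^ 2 + x.2 ^ 2 → f x = 0)
    (hgsupp : ∀ x : ℝ × ℝ, 1 < x.1 ^ 2 + x.2 ^ 2 → g x = 0)
    (θ₁ θ₂ : ℝ) (hθ₁ : θ₁ ∈ Set.Ico (0:ℝ) (2 * π)) (hθ₂ : θ₂ ∈ Set.Ico (0:ℝ) (2 * π)) :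
    |wassersteinPow 2 (lineProj f θ₁) (lineProj g θ₁)
      - wassersteinPow 2 (lineProj f θ₂) (lineProj g θ₂)| ≤ 8 * |θ₁ - θ₂| :=
  sliced_wasserstein_integrand_lipschitz_general f g hfnonneg hgnonneg hfint hgint hfsupp hgsupp θ₁
    θ₂
end

section
/- Let μ, ν be probability densities on an interval [a, b] such that μ(x) ≥ μ_min > 0 and ν(x) ≥ μ_min > 0 for all x ∈ [a, b]. Then the 1-D 2-Wasserstein distance satisfies d_{W2}(μ, ν) ≤ (1/μ_min) · ∫_a^b |μ(x) − ν(x)| dx. Moreover the quantile functions satisfy the uniform bound sup_{z ∈ (0,1)} |Q_μ(z) − Q_ν(z)| ≤ (1/μ_min) · ∫_a^b |μ(x) − ν(x)| dx. -/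
open MeasureTheory Real Set

/-
Write `F`, `G` for the CDFs of `μ`, `ν`, `L = ‖μ - ν‖_{L¹}` and `δ = L / μ_min`. Pointwise
`|F - G| ≤ L`, while the floor makes `F` grow at rate at least `μ_min` on `[a, b]`; hence
`G t ≥ z` forces `F (t + δ) ≥ z`, i.e. `Q_μ(z) ≤ Q_ν(z) + δ`. By symmetry `|Q_μ - Q_ν| ≤ δ` on
`(0, 1)`, and integrating the square of this bound over `(0, 1)` bounds `d_{W2}` by `δ`.
-/

section Support

variable {a b : ℝ} {f : ℝ → ℝ}

lemma integral_eq_intervalIntegral_of_eq_zero_off_Icc (hab : a ≤ b)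
    (hf : ∀ x, x ∉ Icc a b → f x = 0) : ∫ x, f x = ∫ x in a..b, f x := by
  rw [← setIntegral_eq_integral_of_forall_compl_eq_zero hf, integral_Icc_eq_integral_Ioc,
    intervalIntegral.integral_of_le hab]

lemma integrable_of_eq_zero_off_Icc_of_intervalIntegral_eq_one (hab : a ≤ b)
    (hf : ∀ x, x ∉ Icc a b → f x = 0) (hint : ∫ x in a..b, f x = 1) : Integrable f :=
  .of_integral_ne_zero <| by
    rw [integral_eq_intervalIntegral_of_eq_zero_off_Icc hab hf, hint]
    exact one_ne_zero

end Support

section CDF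

variable {a b : ℝ} {μ ν : ℝ → ℝ}

lemma cdfOf_sub_cdfOf (hμ : Integrable μ) (s t : ℝ) :
    cdfOf μ t - cdfOf μ s = ∫ x in s..t, μ x :=
  intervalIntegral.integral_Iic_sub_Iic hμ.integrableOn hμ.integrableOn

lemma cdfOf_eq_zero_of_lt (hμ : ∀ x, x ∉ Icc a b → μ x = 0) {t : ℝ} (ht : t < a) :
    cdfOf μ t = 0 := by
  refine setIntegral_eq_zero_of_forall_eq_zero fun x hx => hμ x fun hmem => ?_
  exact ((mem_Iic.1 hx).trans_lt ht).not_ge hmem.1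

lemma cdfOf_eq_of_le (hab : a ≤ b) (hμ : ∀ x, x ∉ Icc a b → μ x = 0) {t : ℝ} (ht : b ≤ t) :
    cdfOf μ t = ∫ x in a..b, μ x := by
  rw [cdfOf, setIntegral_eq_integral_of_forall_compl_eq_zero fun x hx => hμ x fun hmem =>
    hx (mem_Iic.2 (hmem.2.trans ht)), integral_eq_intervalIntegral_of_eq_zero_off_Icc hab hμ]

lemma abs_cdfOf_sub_cdfOf_le (hμ : Integrable μ) (hν : Integrable ν) (t : ℝ) :
    |cdfOf μ t - cdfOf ν t| ≤ ∫ x, |μ x - ν x| :=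
  calc |cdfOf μ t - cdfOf ν t| = ‖∫ x in Iic t, (μ x - ν x)‖ := by
        rw [cdfOf, cdfOf, integral_sub hμ.integrableOn hν.integrableOn, Real.norm_eq_abs]
    _ ≤ ∫ x in Iic t, |μ x - ν x| := norm_integral_le_integral_norm _
    _ ≤ ∫ x, |μ x - ν x| :=
        setIntegral_le_integral (hμ.sub hν).abs (.of_forall fun _ => abs_nonneg _)

lemma cdfOf_add_mul_le {m s t : ℝ} (hμ : Integrable μ) (hfloor : ∀ x ∈ Icc a b, m ≤ μ x)
    (has : a ≤ s) (hst : s ≤ t) (htb : t ≤ b) :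
    cdfOf μ s + m * (t - s) ≤ cdfOf μ t := by
  have hgrowth : ∫ _ in s..t, m ≤ ∫ x in s..t, μ x :=
    intervalIntegral.integral_mono_on hst intervalIntegrable_const hμ.intervalIntegrable
      fun x hx => hfloor x ⟨has.trans hx.1, hx.2.trans htb⟩
  rw [intervalIntegral.integral_const, smul_eq_mul] at hgrowth
  linarith [cdfOf_sub_cdfOf hμ s t]

end CDF

lemma quantileOf_le_quantileOf_add {μ ν : ℝ → ℝ} {z δ : ℝ}
    (hν : {t | z ≤ cdfOf ν t}.Nonempty) (hμ : BddBelow {t | z ≤ cdfOf μ t})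
    (h : ∀ t, z ≤ cdfOf ν t → z ≤ cdfOf μ (t + δ)) :
    quantileOf μ z ≤ quantileOf ν z + δ :=
  sub_le_iff_le_add.1 <| le_csInf hν fun t ht => sub_le_iff_le_add.2 <| csInf_le hμ (h t ht)

section FloorBound

variable {a b m : ℝ} {μ ν : ℝ → ℝ}

lemma le_cdfOf_add_div_of_le_cdfOf (hab : a ≤ b) (hm : 0 < m) (hμ : Integrable μ)
    (hν : Integrable ν) (hμsupp : ∀ x, x ∉ Icc a b → μ x = 0)
    (hνsupp : ∀ x, x ∉ Icc a b → ν x = 0) (hμint : ∫ x in a..b, μ x = 1)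
    (hfloor : ∀ x ∈ Icc a b, m ≤ μ x) {z t : ℝ} (hz0 : 0 < z) (hz1 : z ≤ 1)
    (ht : z ≤ cdfOf ν t) :
    z ≤ cdfOf μ (t + (∫ x in a..b, |μ x - ν x|) / m) := by
  set L := ∫ x in a..b, |μ x - ν x|
  have hL : 0 ≤ L / m :=
    div_nonneg (intervalIntegral.integral_nonneg hab fun _ _ => abs_nonneg _) hm.le
  rcases le_or_gt b (t + L / m) with hb | hb
  · rwa [cdfOf_eq_of_le hab hμsupp hb, hμint]
  have hat : a ≤ t := not_lt.1 fun hta => hz0.not_ge <| by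
    rwa [cdfOf_eq_zero_of_lt hνsupp hta] at ht
  have hclose : |cdfOf μ t - cdfOf ν t| ≤ L := by
    have := abs_cdfOf_sub_cdfOf_le hμ hν t
    rwa [integral_eq_intervalIntegral_of_eq_zero_off_Icc hab fun x hx => by
      rw [hμsupp x hx, hνsupp x hx, sub_zero, abs_zero]] at this
  have hgrowth := cdfOf_add_mul_le hμ hfloor hat (le_add_of_nonneg_right hL) hb.le
  rw [add_sub_cancel_left, mul_div_cancel₀ _ hm.ne'] at hgrowth
  linarith [(abs_le.1 hclose).1]

lemma quantileOf_le_quantileOf_add_div (hab : a ≤ b) (hm : 0 < m) (hμ : Integrable μ)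
    (hν : Integrable ν) (hμsupp : ∀ x, x ∉ Icc a b → μ x = 0)
    (hνsupp : ∀ x, x ∉ Icc a b → ν x = 0) (hμint : ∫ x in a..b, μ x = 1)
    (hνint : ∫ x in a..b, ν x = 1) (hfloor : ∀ x ∈ Icc a b, m ≤ μ x)
    {z : ℝ} (hz : z ∈ Ioo (0 : ℝ) 1) :
    quantileOf μ z ≤ quantileOf ν z + (∫ x in a..b, |μ x - ν x|) / m := by
  refine quantileOf_le_quantileOf_add ⟨b, ?_⟩ ⟨a, fun t ht => ?_⟩ fun t ht =>
    le_cdfOf_add_div_of_le_cdfOf hab hm hμ hν hμsupp hνsupp hμint hfloor hz.1 hz.2.le ht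
  · rw [mem_ofPred_eq, cdfOf_eq_of_le hab hνsupp le_rfl, hνint]
    exact hz.2.le
  · by_contra! hta
    exact hz.1.not_ge <| by rwa [mem_ofPred_eq, cdfOf_eq_zero_of_lt hμsupp hta] at ht

end FloorBound

lemma wasserstein_le_of_forall_abs_quantileOf_sub_le {p C : ℝ} {μ ν : ℝ → ℝ} (hp : 0 < p)
    (hC : 0 ≤ C) (h : ∀ z ∈ Ioo (0 : ℝ) 1, |quantileOf μ z - quantileOf ν z| ≤ C) :
    wasserstein p μ ν ≤ C := by
  have hpow_nonneg : 0 ≤ wassersteinPow p μ ν :=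
    setIntegral_nonneg measurableSet_Ioo fun _ _ => rpow_nonneg (abs_nonneg _) _
  have hpow_le : ‖wassersteinPow p μ ν‖ ≤ C ^ p * volume.real (Ioo (0 : ℝ) 1) :=
    norm_setIntegral_le_of_norm_le_const measure_Ioo_lt_top fun z hz => by
      rw [Real.norm_eq_abs, abs_of_nonneg (rpow_nonneg (abs_nonneg _) _)]
      exact rpow_le_rpow (abs_nonneg _) (h z hz) hp.le
  rw [Real.volume_real_Ioo, sub_zero, max_eq_left zero_le_one, mul_one] at hpow_le
  calc wasserstein p μ ν ≤ (C ^ p) ^ (1 / p) :=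
        rpow_le_rpow hpow_nonneg ((le_abs_self _).trans hpow_le) (by positivity)
    _ = C := by rw [← rpow_mul hC, mul_one_div_cancel hp.ne', rpow_one]

theorem w2_lipschitz_L1_with_density_floor_general
    (a b : ℝ) (hab : a < b) (μ ν : ℝ → ℝ) (μmin : ℝ) (hμmin : 0 < μmin)
    (hμsupp : ∀ x, x ∉ Set.Icc a b → μ x = 0) (hνsupp : ∀ x, x ∉ Set.Icc a b → ν x = 0)
    (hμint : ∫ x in a..b, μ x = 1) (hνint : ∫ x in a..b, ν x = 1)
    (hμfloor : ∀ x ∈ Set.Icc a b, μmin ≤ μ x) (hνfloor : ∀ x ∈ Set.Icc a b, μmin ≤ ν x) :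
    wasserstein 2 μ ν ≤ (1 / μmin) * ∫ x in a..b, |μ x - ν x| ∧
    ∀ z ∈ Set.Ioo (0:ℝ) 1,
      |quantileOf μ z - quantileOf ν z| ≤ (1 / μmin) * ∫ x in a..b, |μ x - ν x| := by
  have hμ := integrable_of_eq_zero_off_Icc_of_intervalIntegral_eq_one hab.le hμsupp hμint
  have hν := integrable_of_eq_zero_off_Icc_of_intervalIntegral_eq_one hab.le hνsupp hνint
  have hsymm : ∫ x in a..b, |ν x - μ x| = ∫ x in a..b, |μ x - ν x| := by
    simp_rw [abs_sub_comm]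
  have hquantile : ∀ z ∈ Ioo (0 : ℝ) 1,
      |quantileOf μ z - quantileOf ν z| ≤ (1 / μmin) * ∫ x in a..b, |μ x - ν x| := by
    intro z hz
    have hμν := quantileOf_le_quantileOf_add_div hab.le hμmin hμ hν hμsupp hνsupp hμint hνint
      hμfloor hz
    have hνμ := quantileOf_le_quantileOf_add_div hab.le hμmin hν hμ hνsupp hμsupp hνint hμint
      hνfloor hz
    rw [hsymm] at hνμ
    rw [one_div_mul_eq_div, abs_sub_le_iff]
    constructor <;> linarith
  have hL : 0 ≤ (1 / μmin) * ∫ x in a..b, |μ x - ν x| :=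
    mul_nonneg (by positivity) (intervalIntegral.integral_nonneg hab.le fun _ _ => abs_nonneg _)
  exact ⟨wasserstein_le_of_forall_abs_quantileOf_sub_le two_pos hL hquantile, hquantile⟩

/-- `W₂` is Lipschitz with respect to `L¹` under a positive density floor: if `μ, ν` are
probability densities on `[a, b]` bounded below by `μ_min > 0` there, then
`d_{W2}(μ, ν) ≤ (1/μ_min) ‖μ − ν‖_{L¹([a,b])}` and the quantile functions satisfy the same
uniform bound on `(0, 1)`. -/
theorem w2_lipschitz_L1_with_density_floor
    (a b : ℝ) (hab : a < b) (μ ν : ℝ → ℝ) (μmin : ℝ) (hμmin : 0 < μmin)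
    (hμnonneg : ∀ x, 0 ≤ μ x) (hνnonneg : ∀ x, 0 ≤ ν x)
    (hμsupp : ∀ x, x ∉ Set.Icc a b → μ x = 0) (hνsupp : ∀ x, x ∉ Set.Icc a b → ν x = 0)
    (hμint : ∫ x in a..b, μ x = 1) (hνint : ∫ x in a..b, ν x = 1)
    (hμfloor : ∀ x ∈ Set.Icc a b, μmin ≤ μ x) (hνfloor : ∀ x ∈ Set.Icc a b, μmin ≤ ν x) :
    wasserstein 2 μ ν ≤ (1 / μmin) * ∫ x in a..b, |μ x - ν x| ∧
    ∀ z ∈ Set.Ioo (0:ℝ) 1,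
      |quantileOf μ z - quantileOf ν z| ≤ (1 / μmin) * ∫ x in a..b, |μ x - ν x| :=
  w2_lipschitz_L1_with_density_floor_general a b hab μ ν μmin hμmin hμsupp hνsupp hμint hνint
    hμfloor hνfloor
end
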